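/- Let 𝒪 be a complete normed ring whose topology is the 𝔞-adic topology for an ideal 𝔞, and assume 𝒪 is Noetherian. Let R⟨X₁,…,X_l⟩ be the ring of strictly convergent power series, identified with the 𝔞-adic completion of R[X₁,…,X_l]. If I ⊆ R⟨X⟩ is an ideal such that R⟨X⟩/I is flat over R, then: (a) I is flat over R; (b) for every ideal J ⊆ R, I ∩ J·R⟨X⟩ = J·I; (c) if f ∈ I is divisible in R⟨X⟩ by a nonzerodivisor s ∈ R, then f/s ∈ I. -/

import Mathlib

set_option synthInstance.maxHeartbeats 1000000
set_option maxHeartbeats 1000000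

open MvPowerSeries

/-- The set underlying the ring of strictly convergent power series `R⟨X₁,…,X_l⟩`: the
`𝔞`-adic (Hausdorff) completion of `R[X₁,…,X_l]`, realized inside `R[[X₁,…,X_l]]` as the
power series whose coefficients tend to `0` `𝔞`-adically. -/
def StrictlyConvergent {R : Type*} [CommRing R] (𝔞 : Ideal R) (l : ℕ)
    (f : MvPowerSeries (Fin l) R) : Prop :=
  ∀ k : ℕ, {m : Fin l →₀ ℕ | MvPowerSeries.coeff m f ∉ 𝔞 ^ k}.Finite


open LinearMap TensorProduct Function

lemma pi_mem_smul_top {R : Type*} [CommRing R] {ι : Type*} [Fintype ι]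
    (I : Ideal R) (v : ι → R) :
    v ∈ I • (⊤ : Submodule R (ι → R)) ↔ ∀ i, v i ∈ I := by
  constructor
  · intro hv i
    refine Submodule.smul_induction_on hv ?_ ?_
    · intro r hr n _
      exact I.mul_mem_right _ hr
    · intro a b ha hb
      exact I.add_mem ha hb
  · intro hv
    classical
    have : v = ∑ i, (v i) • (Pi.single i (1 : R) : ι → R) := by
      funext j
      simp [Finset.sum_apply, Pi.single_apply, Finset.sum_ite_eq', mul_comm]
    rw [this]
    exact Submodule.sum_mem _ fun i _ =>
      Submodule.smul_mem_smul (hv i) trivial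

lemma lTensor_injective_of_flat_right {R : Type*} [CommRing R]
    {A B C K F N : Type*}
    [AddCommGroup A] [AddCommGroup B] [AddCommGroup C]
    [AddCommGroup K] [AddCommGroup F] [AddCommGroup N]
    [Module R A] [Module R B] [Module R C] [Module R K] [Module R F] [Module R N]
    (f : A →ₗ[R] B) (g : B →ₗ[R] C)
    (hf : Function.Injective f) (hfg : Function.Exact f g) (hg : Function.Surjective g)
    [Module.Flat R C] [Module.Flat R F]
    (p : F →ₗ[R] N) (hp : Function.Surjective p)
    (k : K →ₗ[R] F) (hk : Function.Injective k) (hkp : Function.Exact k p)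
    (hpk : p.comp k = 0) :
    Function.Injective (lTensor N f) := by
  rw [injective_iff_map_eq_zero]
  intro ξ hξ
  obtain ⟨η, rfl⟩ := LinearMap.rTensor_surjective A hp ξ
  have h1 : rTensor B p (lTensor F f η) = 0 := by
    rw [← LinearMap.comp_apply, rTensor_comp_lTensor, ← lTensor_comp_rTensor,
      LinearMap.comp_apply, hξ]
  have hex1 : Function.Exact (rTensor B k) (rTensor B p) := rTensor_exact B hkp hp
  obtain ⟨ζ, hζ⟩ := (hex1 (lTensor F f η)).mp h1
  have h2 : rTensor C k (lTensor K g ζ) = 0 := by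
    rw [← LinearMap.comp_apply, rTensor_comp_lTensor, ← lTensor_comp_rTensor,
      LinearMap.comp_apply, hζ, ← LinearMap.comp_apply, ← lTensor_comp]
    have hgf : g.comp f = 0 := by
      ext a
      simpa using hfg.apply_apply_eq_zero a
    rw [hgf, lTensor_zero, LinearMap.zero_apply]
  have h3 : lTensor K g ζ = 0 :=
    Module.Flat.rTensor_preserves_injective_linearMap k hk
      (by rw [h2, map_zero])
  have hex2 : Function.Exact (lTensor K f) (lTensor K g) := lTensor_exact K hfg hg
  obtain ⟨θ, hθ⟩ := (hex2 ζ).mp h3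
  have h4 : lTensor F f (rTensor A k θ) = lTensor F f η := by
    rw [← LinearMap.comp_apply, lTensor_comp_rTensor, ← rTensor_comp_lTensor,
      LinearMap.comp_apply, hθ, hζ]
  have h5 : rTensor A k θ = η :=
    Module.Flat.lTensor_preserves_injective_linearMap f hf h4
  rw [← h5, ← rTensor_comp_apply, hpk, rTensor_zero, LinearMap.zero_apply]

lemma lTensor_injective_of_flat_right' {R : Type*} [CommRing R]
    {A B C : Type*}
    [AddCommGroup A] [AddCommGroup B] [AddCommGroup C]
    [Module R A] [Module R B] [Module R C]
    (f : A →ₗ[R] B) (g : B →ₗ[R] C)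
    (hf : Function.Injective f) (hfg : Function.Exact f g) (hg : Function.Surjective g)
    [Module.Flat R C] (N : Type*) [AddCommGroup N] [Module R N] :
    Function.Injective (lTensor N f) := by
  refine lTensor_injective_of_flat_right (K := ↥(LinearMap.ker (Finsupp.linearCombination R (_root_.id : N → N)))) (F := N →₀ R) f g hf hfg hg
    (Finsupp.linearCombination R (_root_.id : N → N))
    (Finsupp.linearCombination_id_surjective R N)
    (LinearMap.ker (Finsupp.linearCombination R (_root_.id : N → N))).subtype ?_ ?_ ?_
  · exact Submodule.injective_subtype _
  · exact LinearMap.exact_subtype_ker_map _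
  · ext z
    exact z.2

lemma flat_of_exact {R : Type*} [CommRing R]
    {A B C : Type*}
    [AddCommGroup A] [AddCommGroup B] [AddCommGroup C]
    [Module R A] [Module R B] [Module R C]
    (f : A →ₗ[R] B) (g : B →ₗ[R] C)
    (hf : Function.Injective f) (hfg : Function.Exact f g) (hg : Function.Surjective g)
    [Module.Flat R B] [Module.Flat R C] :
    Module.Flat R A := by
  rw [Module.Flat.iff_rTensor_injective']
  intro J
  have key : Function.Injective (lTensor (↥J) f) :=
    lTensor_injective_of_flat_right' f g hf hfg hg ↥J
  intro ξ₁ ξ₂ h12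
  apply key
  have hBinj : Function.Injective (rTensor B J.subtype) :=
    (Module.Flat.iff_rTensor_injective' (R := R) (M := B)).mp inferInstance J
  apply hBinj
  rw [← LinearMap.comp_apply, rTensor_comp_lTensor, ← lTensor_comp_rTensor,
    ← LinearMap.comp_apply (rTensor B J.subtype), rTensor_comp_lTensor, ← lTensor_comp_rTensor]
  simp only [LinearMap.comp_apply, h12]

lemma mem_smul_of_exact {R : Type*} [CommRing R]
    {A B C : Type*}
    [AddCommGroup A] [AddCommGroup B] [AddCommGroup C]
    [Module R A] [Module R B] [Module R C]
    (f : A →ₗ[R] B) (g : B →ₗ[R] C)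
    (hfg : Function.Exact f g) (hg : Function.Surjective g)
    [Module.Flat R C] (J : Ideal R) (x : B)
    (hx : x ∈ J • (⊤ : Submodule R B)) (hgx : g x = 0) :
    x ∈ J • (LinearMap.range f) := by
  classical
  have hx' : x ∈ J • Submodule.span R (Set.range (_root_.id : B → B)) := by
    rwa [Set.range_id, Submodule.span_univ]
  obtain ⟨a, haJ, hax⟩ := (Submodule.mem_ideal_smul_span_iff_exists_sum J _ x).mp hx'
  let μB : (↥J ⊗[R] B) →ₗ[R] B :=
    TensorProduct.lift ((LinearMap.lsmul R B).comp J.subtype)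
  let μC : (↥J ⊗[R] C) →ₗ[R] C :=
    TensorProduct.lift ((LinearMap.lsmul R C).comp J.subtype)
  have hμC : Function.Injective μC := by
    have h1 : Function.Injective (rTensor C J.subtype) :=
      (Module.Flat.iff_rTensor_injective' (R := R) (M := C)).mp inferInstance J
    have h2 : Function.Injective ((TensorProduct.lid R C).comp (rTensor C J.subtype)) :=
      (TensorProduct.lid R C).injective.comp h1
    rwa [lid_comp_rTensor] at h2
  set ξ : ↥J ⊗[R] B := ∑ b ∈ a.support, (⟨a b, haJ b⟩ : ↥J) ⊗ₜ[R] b with hξdef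
  have hμξ : μB ξ = x := by
    rw [hξdef, map_sum]
    rw [← hax]
    rw [Finsupp.sum]
    apply Finset.sum_congr rfl
    intro b _
    simp [μB]
  have h1 : μC (lTensor (↥J) g ξ) = g (μB ξ) := by
    rw [hξdef]
    simp only [map_sum]
    apply Finset.sum_congr rfl
    intro b _
    simp [μB, μC]
  have h1' : μC (lTensor (↥J) g ξ) = 0 := by rw [h1, hμξ, hgx]
  have h2 : lTensor (↥J) g ξ = 0 := hμC (by rw [h1', map_zero])
  have hex : Function.Exact (lTensor (↥J) f) (lTensor (↥J) g) := lTensor_exact (↥J) hfg hg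
  obtain ⟨ω, hω⟩ := (hex ξ).mp h2
  have himg : ∀ ω : ↥J ⊗[R] A, μB (lTensor (↥J) f ω) ∈ J • LinearMap.range f := by
    intro ω
    induction ω using TensorProduct.induction_on with
    | zero => simpa using Submodule.zero_mem _
    | tmul c y =>
      have : μB (lTensor (↥J) f ((c : ↥J) ⊗ₜ[R] y)) = (c : R) • f y := by simp [μB]
      rw [this]
      exact Submodule.smul_mem_smul c.2 ⟨y, rfl⟩
    | add u v hu hv =>
      rw [map_add, map_add]
      exact Submodule.add_mem _ hu hv
  rw [← hμξ, ← hω]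
  exact himg ω

lemma strictlyConvergent_flat {R : Type u} [CommRing R] [IsNoetherianRing R] (𝔞 : Ideal R)
    [IsAdicComplete 𝔞 R] (l : ℕ) (T : Subalgebra R (MvPowerSeries (Fin l) R))
    (hT : (T : Set (MvPowerSeries (Fin l) R)) = {f | StrictlyConvergent 𝔞 l f}) :
    Module.Flat R T := by
  classical
  apply Module.Flat.of_forall_isTrivialRelation
  intro n₀ f x hfx
  let ι := Fin n₀
  let φ : (ι → R) →ₗ[R] R := ∑ i, f i • LinearMap.proj i
  have hφ : ∀ v : ι → R, φ v = ∑ i, f i * v i := by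
    intro v
    simp [φ, LinearMap.sum_apply]
  obtain ⟨S, hS⟩ := IsNoetherian.noetherian (LinearMap.ker φ)
  obtain ⟨k, hk⟩ := Ideal.exists_pow_inf_eq_pow_smul 𝔞 (M := ι → R) (LinearMap.ker φ)
  let t : (Fin l →₀ ℕ) → ι → R :=
    fun m i => MvPowerSeries.coeff m ((x i : MvPowerSeries (Fin l) R))
  have hSC : ∀ i, StrictlyConvergent 𝔞 l ((x i : MvPowerSeries (Fin l) R)) := by
    intro i
    have h := (x i).2
    rw [← SetLike.mem_coe, hT] at h
    exact h
  have htK : ∀ m, t m ∈ LinearMap.ker φ := by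
    intro m
    rw [LinearMap.mem_ker, hφ]
    have h0 := congrArg (fun z : T =>
      ((MvPowerSeries.coeff m) ∘ₗ T.val.toLinearMap) z) hfx
    simp only [map_sum, map_smul, map_zero, AlgHom.toLinearMap_apply, Subalgebra.coe_val,
      LinearMap.comp_apply, smul_eq_mul] at h0
    simpa [t] using h0
  have htfin : ∀ n : ℕ, {m | t m ∉ 𝔞 ^ n • (⊤ : Submodule R (ι → R))}.Finite := by
    intro n
    apply Set.Finite.subset (Set.finite_iUnion (fun i : ι => hSC i n))
    intro m hm
    simp only [Set.mem_setOf_eq] at hm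
    rw [Set.mem_iUnion]
    by_contra hc
    push_neg at hc
    apply hm
    rw [pi_mem_smul_top]
    intro i
    have hci := hc i
    simp only [Set.mem_setOf_eq, not_not] at hci
    exact hci
  have hrange : Set.range ((↑) : {v // v ∈ S} → (ι → R)) = (↑S : Set (ι → R)) := by
    rw [Subtype.range_coe_subtype]
    ext v
    simp
  have hchoice : ∀ m, ∃ a : {v // v ∈ S} →₀ R,
      ((a.sum fun j c => c • (j : ι → R)) = t m) ∧
      ∀ (j : {v // v ∈ S}) (n : ℕ),
        t m ∈ 𝔞 ^ (n + k) • (⊤ : Submodule R (ι → R)) → a j ∈ 𝔞 ^ n := by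
    intro m
    by_cases h0 : t m = 0
    · refine ⟨0, ?_, ?_⟩
      · simp [h0]
      · intro j n _
        simp only [Finsupp.coe_zero, Pi.zero_apply]
        exact zero_mem _
    · have hex : ∃ n, t m ∉ 𝔞 ^ n • (⊤ : Submodule R (ι → R)) := by
        have hi' : ∃ i, t m i ≠ 0 := by
          by_contra hc
          push_neg at hc
          exact h0 (funext hc)
        obtain ⟨i, hi⟩ := hi'
        by_contra hc
        push_neg at hc
        apply hi
        apply IsHausdorff.haus (inferInstance : IsHausdorff 𝔞 R) (t m i)
        intro n
        rw [SModEq.zero, Ideal.smul_top_eq_map]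
        have : t m i ∈ 𝔞 ^ n := (pi_mem_smul_top _ _).mp (hc n) i
        simpa using this
      have he := Nat.find_spec hex
      have he0 : Nat.find hex ≠ 0 := by
        intro h
        rw [h, pow_zero, Ideal.one_eq_top, Submodule.top_smul] at he
        exact he trivial
      have hd1 : t m ∈ 𝔞 ^ (Nat.find hex - 1) • (⊤ : Submodule R (ι → R)) := by
        have hlt : Nat.find hex - 1 < Nat.find hex := Nat.sub_lt (Nat.pos_of_ne_zero he0) one_pos
        have := Nat.find_min hex hlt
        simpa using this
      have hd2 : ∀ n, t m ∈ 𝔞 ^ n • (⊤ : Submodule R (ι → R)) → n ≤ Nat.find hex - 1 := by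
        intro n hn
        by_contra hlt
        push_neg at hlt
        apply he
        exact Submodule.smul_mono_left (Ideal.pow_le_pow_right (by omega)) hn
      have hmem : t m ∈ 𝔞 ^ (Nat.find hex - 1 - k) •
          Submodule.span R (Set.range ((↑) : {v // v ∈ S} → (ι → R))) := by
        rw [hrange]
        by_cases hdk : k ≤ Nat.find hex - 1
        · have h1 : t m ∈ 𝔞 ^ (Nat.find hex - 1) • (⊤ : Submodule R (ι → R)) ⊓
              LinearMap.ker φ := ⟨hd1, htK m⟩
          rw [hk _ hdk] at h1
          have h2 : 𝔞 ^ (Nat.find hex - 1 - k) •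
              (𝔞 ^ k • (⊤ : Submodule R (ι → R)) ⊓ LinearMap.ker φ) ≤
              𝔞 ^ (Nat.find hex - 1 - k) • Submodule.span R (↑S : Set (ι → R)) := by
            rw [hS]
            exact smul_mono_right _ inf_le_right
          exact h2 h1
        · have hd0 : Nat.find hex - 1 - k = 0 := by omega
          rw [hd0, pow_zero, Ideal.one_eq_top, Submodule.top_smul, hS]
          exact htK m
      obtain ⟨a, haI, hasum⟩ := (Submodule.mem_ideal_smul_span_iff_exists_sum _ _ _).mp hmem
      refine ⟨a, hasum, ?_⟩
      intro j n hn
      have hnd : n + k ≤ Nat.find hex - 1 := hd2 _ hn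
      exact Ideal.pow_le_pow_right (by omega) (haI j)
  choose c hc1 hc2 using hchoice
  let Y : {v // v ∈ S} → MvPowerSeries (Fin l) R := fun j => fun m => c m j
  have hYT : ∀ j, Y j ∈ T := by
    intro j
    rw [← SetLike.mem_coe, hT]
    intro n
    apply Set.Finite.subset (htfin (n + k))
    intro m hm
    simp only [Set.mem_setOf_eq] at hm ⊢
    intro hmem
    apply hm
    have := hc2 m j n hmem
    exact this
  suffices hsuff : ∃ (κ : Type u) (_ : Fintype κ) (a : ι → κ → R) (y : κ → T),
      (∀ i, x i = ∑ j, a i j • y j) ∧ ∀ j, ∑ i, f i * a i j = 0 by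
    obtain ⟨κ, _, a, y, h1, h2⟩ := hsuff
    let e := Fintype.equivFin κ
    refine ⟨Fintype.card κ, fun i j => a i (e.symm j), fun j => y (e.symm j), fun i => ?_,
      fun j => h2 _⟩
    rw [h1 i]
    exact (e.symm.sum_comp (fun j => a i j • y j)).symm
  refine ⟨{v // v ∈ S}, inferInstance, fun i (j : {v // v ∈ S}) => j.val i,
    fun j => ⟨Y j, hYT j⟩, ?_, ?_⟩
  · intro i
    apply Subtype.ext
    have hcoe : ((∑ j : {v // v ∈ S}, (j.val i) • (⟨Y j, hYT j⟩ : T)) : T).val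
        = ∑ j : {v // v ∈ S}, (j.val i) • Y j := by
      rw [show ((∑ j : {v // v ∈ S}, (j.val i) • (⟨Y j, hYT j⟩ : T)) : T).val
          = T.val.toLinearMap (∑ j : {v // v ∈ S}, (j.val i) • (⟨Y j, hYT j⟩ : T)) from rfl]
      rw [map_sum]
      rfl
    rw [hcoe]
    funext m
    have h1 := hc1 m
    rw [Finsupp.sum_fintype _ _ (by intro j; simp)] at h1
    have h2 := congrFun h1 i
    simp only [Finset.sum_apply, Pi.smul_apply, smul_eq_mul] at h2
    -- h2 : ∑ j, c m j * (j : ι → R) i = t m i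
    have hL : (x i).val m = t m i := rfl
    rw [hL, ← h2, show ((∑ j : {v // v ∈ S}, (j.val i) • Y j : MvPowerSeries (Fin l) R)) m
        = MvPowerSeries.coeff m (∑ j : {v // v ∈ S}, (j.val i) • Y j) from rfl, map_sum]
    apply Finset.sum_congr rfl
    intro j _
    have hterm : ((j.val i • Y j : MvPowerSeries (Fin l) R)) m = j.val i * (c m) j := by
      rw [show ((j.val i • Y j : MvPowerSeries (Fin l) R)) m
          = MvPowerSeries.coeff m (j.val i • Y j) from rfl]
      rw [map_smul, smul_eq_mul, MvPowerSeries.coeff_apply]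
    exact (mul_comm _ _).trans hterm.symm
  · intro j
    have hjK : j.val ∈ LinearMap.ker φ := by
      rw [← hS]
      exact Submodule.subset_span j.2
    rw [LinearMap.mem_ker, hφ] at hjK
    exact hjK

/-- Let `R` be a complete (Noetherian) normed ring whose topology is the
`𝔞`-adic topology, and let `T = R⟨X₁,…,X_l⟩` be the ring of strictly convergent power
series.  If `I ⊆ R⟨X⟩` is an ideal such that `R⟨X⟩/I` is flat over `R`, then:
(a) `I` is flat over `R`;
(b) for every ideal `J ⊆ R`, `I ∩ J·R⟨X⟩ = J·I`;
(c) if `f ∈ I` is divisible in `R⟨X⟩` by a nonzerodivisor `s ∈ R`, then `f/s ∈ I`. -/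
theorem flat_quotient_ideal_properties
    {R : Type*} [CommRing R] [IsNoetherianRing R] (𝔞 : Ideal R)
    [IsAdicComplete 𝔞 R] (l : ℕ)
    (T : Subalgebra R (MvPowerSeries (Fin l) R))
    (hT : (T : Set (MvPowerSeries (Fin l) R)) = {f | StrictlyConvergent 𝔞 l f})
    (I : Ideal T) (hflat : Module.Flat R (T ⧸ I)) :
    Module.Flat R I ∧
    (∀ J : Ideal R,
      I ⊓ Ideal.map (algebraMap R T) J = Ideal.map (algebraMap R T) J * I) ∧
    (∀ f, f ∈ I → ∀ s : R, s ∈ nonZeroDivisors R → ∀ g : T,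
      f = algebraMap R T s * g → g ∈ I) := by
  classical
  haveI hTflat : Module.Flat R T := strictlyConvergent_flat 𝔞 l T hT
  haveI := hflat
  let g : T →ₗ[R] T ⧸ I := (Ideal.Quotient.mkₐ R I).toLinearMap
  have hg : Function.Surjective g := Ideal.Quotient.mk_surjective
  let fI : ↥(I.restrictScalars R) →ₗ[R] T := (I.restrictScalars R).subtype
  have hfI : Function.Injective fI := Submodule.injective_subtype _
  have hfg : Function.Exact fI g := by
    intro y
    constructor
    · intro hy
      have hyI : y ∈ I := Ideal.Quotient.eq_zero_iff_mem.mp hy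
      exact ⟨⟨y, hyI⟩, rfl⟩
    · rintro ⟨z, rfl⟩
      exact Ideal.Quotient.eq_zero_iff_mem.mpr z.2
  refine ⟨?_, ?_, ?_⟩
  · exact flat_of_exact (A := ↥(I.restrictScalars R)) fI g hfI hfg hg
  · intro J
    refine le_antisymm ?_ (le_inf Ideal.mul_le_right Ideal.mul_le_left)
    intro x hx
    obtain ⟨hxI, hxJ⟩ := hx
    have hx2 : x ∈ J • (⊤ : Submodule R T) := by
      rw [Ideal.smul_top_eq_map]
      exact hxJ
    have hgx : g x = 0 := Ideal.Quotient.eq_zero_iff_mem.mpr hxI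
    have hmem := mem_smul_of_exact (A := ↥(Submodule.restrictScalars R I)) (C := T ⧸ I) fI g hfg hg J x hx2 hgx
    have hsub : J • (LinearMap.range fI) ≤
        Submodule.restrictScalars R (Ideal.map (algebraMap R T) J * I) := by
      rw [Submodule.range_subtype]
      intro z hz
      refine Submodule.smul_induction_on hz ?_ ?_
      · intro r hr n hn
        rw [Submodule.restrictScalars_mem] at hn ⊢
        rw [Algebra.smul_def]
        exact Ideal.mul_mem_mul (Ideal.mem_map_of_mem _ hr) hn
      · intro a b ha hb
        exact Submodule.add_mem _ ha hb
    exact hsub hmem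
  · intro x hxI s hs y hdiv
    have hreg : IsSMulRegular (T ⧸ I) s := by
      have hR : IsSMulRegular R s := by
        intro a b hab
        simp only [smul_eq_mul] at hab
        exact (mul_cancel_left_mem_nonZeroDivisors hs).mp hab
      have ht : IsSMulRegular ((T ⧸ I) ⊗[R] R) s := hR.lTensor (T ⧸ I)
      intro a b hab
      have hab' : s • a = s • b := hab
      have h2 : s • ((TensorProduct.rid R (T ⧸ I)).symm a)
          = s • ((TensorProduct.rid R (T ⧸ I)).symm b) := by
        rw [← map_smul, ← map_smul, hab']
      exact (TensorProduct.rid R (T ⧸ I)).symm.injective (ht h2)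
    have h0 : s • (g y) = 0 := by
      rw [← map_smul]
      have : (s • y : T) = x := by
        rw [hdiv, Algebra.smul_def]
      rw [this]
      exact Ideal.Quotient.eq_zero_iff_mem.mpr hxI
    have hgy : g y = 0 := by
      apply hreg
      show s • g y = s • (0 : T ⧸ I)
      rw [h0, smul_zero]
    exact Ideal.Quotient.eq_zero_iff_mem.mp hgy
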